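/- Let m_j, m_k, m_l be real numbers such that the 2×2 matrix A = [[m_j² − m_k² − m_l², 2 m_k² m_l²], [2, m_j² − m_k² − m_l²]] is invertible, and let (p, p̃) ∈ ℝ² be the unique solution of A (p, p̃)ᵀ = (1, 0)ᵀ. Let v, ṽ : ℝ × ℝ² → ℝ be smooth functions satisfying (□ + m_k²) v = 0 and (□ + m_l²) ṽ = 0 on ℝ × ℝ². Then the exact identity v ṽ = (□ + m_j²)( p · v ṽ + p̃ · Q₀(v, ṽ) ) − 2 p̃ Σ_{a,b=0}^{2} Σ_{c,d=0}^{2} η_{ab} η_{cd} Q_{cb}(∂_a v, ∂_d ṽ) holds pointwise on ℝ × ℝ². -/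

import Mathlib

/- Coordinates on ℝ × ℝ² are encoded as points `x : Fin 3 → ℝ` with
`t = x 0`, `x₁ = x 1`, `x₂ = x 2`. -/

/-- The partial derivative `∂ₐ`. -/
noncomputable def pd (a : Fin 3) (f : (Fin 3 → ℝ) → ℝ) : (Fin 3 → ℝ) → ℝ :=
  fun x => fderiv ℝ f x (Pi.single a 1)

/-- The d'Alembertian `□ = ∂₀² - ∂₁² - ∂₂²`. -/
noncomputable def dAlembert (f : (Fin 3 → ℝ) → ℝ) : (Fin 3 → ℝ) → ℝ :=
  fun x => pd 0 (pd 0 f) x - pd 1 (pd 1 f) x - pd 2 (pd 2 f) x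

/-- The null form `Q₀(φ, ψ) = -Σ_{a,b} η_{ab} (∂_a φ)(∂_b ψ)`. -/
noncomputable def Q0 (f g : (Fin 3 → ℝ) → ℝ) : (Fin 3 → ℝ) → ℝ :=
  fun x => pd 0 f x * pd 0 g x - pd 1 f x * pd 1 g x - pd 2 f x * pd 2 g x

/-- The strong null forms `Q_{ab}(φ, ψ) = (∂_a φ)(∂_b ψ) - (∂_b φ)(∂_a ψ)`. -/
noncomputable def Qab (a b : Fin 3) (f g : (Fin 3 → ℝ) → ℝ) : (Fin 3 → ℝ) → ℝ :=
  fun x => pd a f x * pd b g x - pd b f x * pd a g x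

/-- The Minkowski metric coefficients `(η_{ab}) = diag(-1, 1, 1)`. -/
def eta (a b : Fin 3) : ℝ := if a = b then (if a = 0 then -1 else 1) else 0


@[fun_prop]
lemma pd_contDiff {f : (Fin 3 → ℝ) → ℝ} (hf : ContDiff ℝ (⊤ : ℕ∞) f) (a : Fin 3) :
    ContDiff ℝ (⊤ : ℕ∞) (pd a f) := by
  unfold pd
  exact (hf.fderiv_right (by simp)).clm_apply contDiff_const

lemma pd_fun_add {f g : (Fin 3 → ℝ) → ℝ} (hf : ContDiff ℝ (⊤ : ℕ∞) f) (hg : ContDiff ℝ (⊤ : ℕ∞) g) (a : Fin 3) :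
    pd a (fun y => f y + g y) = fun y => pd a f y + pd a g y := by
  funext y
  unfold pd
  rw [fderiv_fun_add ((hf.differentiable (by simp)).differentiableAt)
      ((hg.differentiable (by simp)).differentiableAt)]
  simp

lemma pd_fun_sub {f g : (Fin 3 → ℝ) → ℝ} (hf : ContDiff ℝ (⊤ : ℕ∞) f) (hg : ContDiff ℝ (⊤ : ℕ∞) g) (a : Fin 3) :
    pd a (fun y => f y - g y) = fun y => pd a f y - pd a g y := by
  funext y
  unfold pd
  rw [fderiv_fun_sub ((hf.differentiable (by simp)).differentiableAt)
      ((hg.differentiable (by simp)).differentiableAt)]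
  simp

lemma pd_fun_mul {f g : (Fin 3 → ℝ) → ℝ} (hf : ContDiff ℝ (⊤ : ℕ∞) f) (hg : ContDiff ℝ (⊤ : ℕ∞) g) (a : Fin 3) :
    pd a (fun y => f y * g y) = fun y => pd a f y * g y + f y * pd a g y := by
  funext y
  unfold pd
  rw [fderiv_fun_mul ((hf.differentiable (by simp)).differentiableAt)
      ((hg.differentiable (by simp)).differentiableAt)]
  simp
  ring

lemma pd_fun_cmul {f : (Fin 3 → ℝ) → ℝ} (hf : ContDiff ℝ (⊤ : ℕ∞) f) (c : ℝ) (a : Fin 3) :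
    pd a (fun y => c * f y) = fun y => c * pd a f y := by
  funext y
  unfold pd
  rw [fderiv_const_mul ((hf.differentiable (by simp)).differentiableAt)]
  simp

lemma pd_fun_const (c : ℝ) (a : Fin 3) : pd a (fun _ => c) = fun _ => 0 := by
  funext y
  unfold pd
  simp

lemma pd_comm {f : (Fin 3 → ℝ) → ℝ} (hf : ContDiff ℝ (⊤ : ℕ∞) f) (a b : Fin 3) :
    pd a (pd b f) = pd b (pd a f) := by
  funext x
  have hder : ∀ y, HasFDerivAt f (fderiv ℝ f y) y :=
    fun y => ((hf.differentiable (by simp)) y).hasFDerivAt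
  have h2 : ContDiff ℝ (⊤ : ℕ∞) (fderiv ℝ f) := hf.fderiv_right (by simp)
  have hx : HasFDerivAt (fderiv ℝ f) (fderiv ℝ (fderiv ℝ f) x) x :=
    ((h2.differentiable (by simp)) x).hasFDerivAt
  have hsym := second_derivative_symmetric hder hx
  have key : ∀ w : Fin 3 → ℝ, fderiv ℝ (fun y => fderiv ℝ f y w) x
      = (fderiv ℝ (fderiv ℝ f) x).flip w := by
    intro w
    have := fderiv_clm_apply ((h2.differentiable (by simp)).differentiableAt (x := x))
      (differentiableAt_const w)
    simpa using this
  show fderiv ℝ (fun y => fderiv ℝ f y (Pi.single b 1)) x (Pi.single a 1)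
      = fderiv ℝ (fun y => fderiv ℝ f y (Pi.single a 1)) x (Pi.single b 1)
  rw [key, key]
  simpa using hsym (Pi.single a 1) (Pi.single b 1)

@[simp] lemma eta00 : eta 0 0 = -1 := rfl
@[simp] lemma eta01 : eta 0 1 = 0 := rfl
@[simp] lemma eta02 : eta 0 2 = 0 := rfl
@[simp] lemma eta10 : eta 1 0 = 0 := rfl
@[simp] lemma eta11 : eta 1 1 = 1 := rfl
@[simp] lemma eta12 : eta 1 2 = 0 := rfl
@[simp] lemma eta20 : eta 2 0 = 0 := rfl
@[simp] lemma eta21 : eta 2 1 = 0 := rfl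
@[simp] lemma eta22 : eta 2 2 = 1 := rfl

/-- suppose the normal-form matrix
`A = [[m_j² − m_k² − m_l², 2 m_k² m_l²], [2, m_j² − m_k² − m_l²]]` is invertible
and `(p, p̃)` solves `A (p, p̃)ᵀ = (1, 0)ᵀ`.  If `v, ṽ` are smooth solutions of
`(□ + m_k²) v = 0` and `(□ + m_l²) ṽ = 0`, then
`v ṽ = (□ + m_j²)(p v ṽ + p̃ Q₀(v, ṽ))
       − 2 p̃ Σ_{a,b,c,d} η_{ab} η_{cd} Q_{cb}(∂_a v, ∂_d ṽ)` pointwise. -/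
theorem normal_form_transformation (mj mk ml : ℝ)
    (hA : IsUnit !![mj ^ 2 - mk ^ 2 - ml ^ 2, 2 * mk ^ 2 * ml ^ 2;
                    2, mj ^ 2 - mk ^ 2 - ml ^ 2])
    (p pt : ℝ)
    (hp1 : (mj ^ 2 - mk ^ 2 - ml ^ 2) * p + 2 * mk ^ 2 * ml ^ 2 * pt = 1)
    (hp2 : 2 * p + (mj ^ 2 - mk ^ 2 - ml ^ 2) * pt = 0)
    (v vt : (Fin 3 → ℝ) → ℝ) (hv : ContDiff ℝ (⊤ : ℕ∞) v) (hvt : ContDiff ℝ (⊤ : ℕ∞) vt)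
    (hveq : ∀ x, dAlembert v x + mk ^ 2 * v x = 0)
    (hvteq : ∀ x, dAlembert vt x + ml ^ 2 * vt x = 0)
    (x : Fin 3 → ℝ) :
    v x * vt x
      = (dAlembert (fun y => p * (v y * vt y) + pt * Q0 v vt y) x
          + mj ^ 2 * (p * (v x * vt x) + pt * Q0 v vt x))
        - 2 * pt * ∑ a : Fin 3, ∑ b : Fin 3, ∑ c : Fin 3, ∑ d : Fin 3,
            eta a b * eta c d * Qab c b (pd a v) (pd d vt) x := by
  -- differentiated field equations
  have EV : pd 0 (pd 0 v) x - pd 1 (pd 1 v) x - pd 2 (pd 2 v) x + mk ^ 2 * v x = 0 := hveq x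
  have EW : pd 0 (pd 0 vt) x - pd 1 (pd 1 vt) x - pd 2 (pd 2 vt) x + ml ^ 2 * vt x = 0 := hvteq x
  have Ev : ∀ c : Fin 3, pd c (pd 0 (pd 0 v)) x - pd c (pd 1 (pd 1 v)) x
      - pd c (pd 2 (pd 2 v)) x + mk ^ 2 * pd c v x = 0 := by
    intro c
    have h1 : pd c (fun y => (pd 0 (pd 0 v) y - pd 1 (pd 1 v) y - pd 2 (pd 2 v) y)
        + mk ^ 2 * v y) = pd c (fun _ => (0:ℝ)) := by
      rw [show (fun y => (pd 0 (pd 0 v) y - pd 1 (pd 1 v) y - pd 2 (pd 2 v) y) + mk ^ 2 * v y)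
          = (fun _ => (0:ℝ)) from funext fun y => hveq y]
    rw [pd_fun_add (by fun_prop) (by fun_prop),
        pd_fun_sub (by fun_prop) (by fun_prop),
        pd_fun_sub (by fun_prop) (by fun_prop),
        pd_fun_cmul (by fun_prop)] at h1
    have h2 := congrFun h1 x
    have h3 : pd c (fun _ => (0:ℝ)) x = 0 := by
      unfold pd; simp
    simp only [h3] at h2
    linarith [h2]
  have Ew : ∀ c : Fin 3, pd c (pd 0 (pd 0 vt)) x - pd c (pd 1 (pd 1 vt)) x
      - pd c (pd 2 (pd 2 vt)) x + ml ^ 2 * pd c vt x = 0 := by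
    intro c
    have h1 : pd c (fun y => (pd 0 (pd 0 vt) y - pd 1 (pd 1 vt) y - pd 2 (pd 2 vt) y)
        + ml ^ 2 * vt y) = pd c (fun _ => (0:ℝ)) := by
      rw [show (fun y => (pd 0 (pd 0 vt) y - pd 1 (pd 1 vt) y - pd 2 (pd 2 vt) y) + ml ^ 2 * vt y)
          = (fun _ => (0:ℝ)) from funext fun y => hvteq y]
    rw [pd_fun_add (by fun_prop) (by fun_prop),
        pd_fun_sub (by fun_prop) (by fun_prop),
        pd_fun_sub (by fun_prop) (by fun_prop),
        pd_fun_cmul (by fun_prop)] at h1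
    have h2 := congrFun h1 x
    have h3 : pd c (fun _ => (0:ℝ)) x = 0 := by
      unfold pd; simp
    simp only [h3] at h2
    linarith [h2]
  have Ev0 := Ev 0; have Ev1 := Ev 1; have Ev2 := Ev 2
  have Ew0 := Ew 0; have Ew1 := Ew 1; have Ew2 := Ew 2
  clear Ev Ew hveq hvteq hA
  -- expand the goal
  simp only [dAlembert, Q0, Qab, Fin.sum_univ_three, eta00, eta01, eta02, eta10, eta11,
    eta12, eta20, eta21, eta22]
  simp (disch := fun_prop) only [pd_fun_add, pd_fun_sub, pd_fun_mul, pd_fun_cmul, pd_fun_const]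
  -- normalize order of derivatives
  simp only [pd_comm hv 1 0, pd_comm hv 2 0, pd_comm hv 2 1,
    pd_comm hvt 1 0, pd_comm hvt 2 0, pd_comm hvt 2 1,
    pd_comm (pd_contDiff hv 0) 1 0, pd_comm (pd_contDiff hv 0) 2 0, pd_comm (pd_contDiff hv 0) 2 1,
    pd_comm (pd_contDiff hv 1) 1 0, pd_comm (pd_contDiff hv 1) 2 0, pd_comm (pd_contDiff hv 1) 2 1,
    pd_comm (pd_contDiff hv 2) 1 0, pd_comm (pd_contDiff hv 2) 2 0, pd_comm (pd_contDiff hv 2) 2 1,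
    pd_comm (pd_contDiff hvt 0) 1 0, pd_comm (pd_contDiff hvt 0) 2 0, pd_comm (pd_contDiff hvt 0) 2 1,
    pd_comm (pd_contDiff hvt 1) 1 0, pd_comm (pd_contDiff hvt 1) 2 0, pd_comm (pd_contDiff hvt 1) 2 1,
    pd_comm (pd_contDiff hvt 2) 1 0, pd_comm (pd_contDiff hvt 2) 2 0, pd_comm (pd_contDiff hvt 2) 2 1]
      at Ev0 Ev1 Ev2 Ew0 Ew1 Ew2 ⊢
  linear_combination
    (-(v x * vt x)) * hp1
    + (-(pd 0 v x * pd 0 vt x - pd 1 v x * pd 1 vt x - pd 2 v x * pd 2 vt x)) * hp2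
    + (- p * vt x + 2 * pt * ml ^ 2 * vt x
        - 2 * pt * (pd 0 (pd 0 vt) x - pd 1 (pd 1 vt) x - pd 2 (pd 2 vt) x + ml ^ 2 * vt x)) * EV
    + (- p * v x + 2 * pt * mk ^ 2 * v x) * EW
    + (- pt * pd 0 vt x) * Ev0 + (pt * pd 1 vt x) * Ev1 + (pt * pd 2 vt x) * Ev2
    + (- pt * pd 0 v x) * Ew0 + (pt * pd 1 v x) * Ew1 + (pt * pd 2 v x) * Ew2
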